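/- arXiv:2003.10074 — 2 statements merged into one kernel-verified Lean document; each statement's English description precedes it below -/
import Mathlib

section
/- Special soundness of the Schnorr-style verifiable decryption: if two accepting transcripts (A, B, Z) and (A, B, Z') with the same commitments but distinct challenges C ≠ C' satisfy the verification equations for the same statement (m, c₁, c₂, h, g), then the extracted witness k* = (Z − Z')/(C − C') satisfies h = g^{k*} and c₂ / c₁^{k*} = g^m. -/
/-- Exponentiation by an element of ℤ_p. -/
def zpow' {G : Type*} [CommGroup G] (p : ℕ) (x : G) (e : ZMod p) : G :=
  x ^ e.val

section Aux
variable {G : Type*} [CommGroup G] {p : ℕ} [NeZero p]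

lemma zpow'_add (x : G) (hx : x ^ p = 1) (a b : ZMod p) :
    zpow' p x (a + b) = zpow' p x a * zpow' p x b := by
  have hd : orderOf x ∣ p := orderOf_dvd_of_pow_eq_one hx
  rw [zpow', zpow', zpow', ← pow_add]
  exact pow_eq_pow_iff_modEq.mpr
    (Nat.ModEq.of_dvd hd (by rw [ZMod.val_add]; exact Nat.mod_modEq _ p))

lemma zpow'_mul (x : G) (hx : x ^ p = 1) (a b : ZMod p) :
    zpow' p x (a * b) = zpow' p (zpow' p x a) b := by
  have hd : orderOf x ∣ p := orderOf_dvd_of_pow_eq_one hx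
  rw [zpow', zpow', zpow', ← pow_mul]
  exact pow_eq_pow_iff_modEq.mpr
    (Nat.ModEq.of_dvd hd (by rw [ZMod.val_mul]; exact Nat.mod_modEq _ p))

lemma zpow'_sub (x : G) (hx : x ^ p = 1) (a b : ZMod p) :
    zpow' p x (a - b) = zpow' p x a / zpow' p x b := by
  have := zpow'_add x hx (a - b) b
  rw [sub_add_cancel] at this
  rw [this, mul_div_cancel_right]

lemma zpow'_one (hp : 1 < p) (x : G) : zpow' p x 1 = x := by
  rw [zpow', ZMod.val_one_eq_one_mod, Nat.mod_eq_of_lt hp, pow_one]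

end Aux

/-- Special soundness of the Schnorr-style verifiable decryption: two
accepting transcripts with the same commitments and distinct challenges
yield an extracted witness k* = (Z − Z')/(C − C') with h = g^{k*} and
c₂ / c₁^{k*} = g^m. -/
theorem vpke_special_soundness (p : ℕ) [Fact p.Prime]
    {G : Type*} [CommGroup G] [Fintype G] (hcard : Fintype.card G = p)
    (g : G) (hg : orderOf g = p)
    (m C C' Z Z' : ZMod p) (h c₁ c₂ A B : G) (hCC : C ≠ C')
    (hver1 : zpow' p g (m * C) * zpow' p c₁ Z = A * zpow' p c₂ C)
    (hver2 : zpow' p g Z = B * zpow' p h C)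
    (hver1' : zpow' p g (m * C') * zpow' p c₁ Z' = A * zpow' p c₂ C')
    (hver2' : zpow' p g Z' = B * zpow' p h C') :
    h = zpow' p g ((Z - Z') / (C - C')) ∧
      c₂ / zpow' p c₁ ((Z - Z') / (C - C')) = zpow' p g m := by
  haveI : NeZero p := ⟨(Fact.out : p.Prime).ne_zero⟩
  have hp1 : 1 < p := (Fact.out : p.Prime).one_lt
  have hone : ∀ x : G, x ^ p = 1 := fun x => by rw [← hcard]; exact pow_card_eq_one
  have hD : C - C' ≠ 0 := sub_ne_zero.mpr hCC
  have hDinv : (C - C') * (C - C')⁻¹ = 1 := mul_inv_cancel₀ hD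
  -- From hver2, hver2': g^(Z-Z') = h^(C-C')
  have e2 : zpow' p g (Z - Z') = zpow' p h (C - C') := by
    rw [zpow'_sub g (hone g), zpow'_sub h (hone h), hver2, hver2']
    rw [mul_div_mul_comm, div_self', one_mul]
  have goal1 : h = zpow' p g ((Z - Z') / (C - C')) := by
    calc h = zpow' p h 1 := (zpow'_one hp1 h).symm
    _ = zpow' p h ((C - C') * (C - C')⁻¹) := by rw [hDinv]
    _ = zpow' p (zpow' p h (C - C')) ((C - C')⁻¹) := zpow'_mul h (hone h) _ _
    _ = zpow' p (zpow' p g (Z - Z')) ((C - C')⁻¹) := by rw [e2]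
    _ = zpow' p g ((Z - Z') * (C - C')⁻¹) := (zpow'_mul g (hone g) _ _).symm
    _ = zpow' p g ((Z - Z') / (C - C')) := by rw [div_eq_mul_inv]
  refine ⟨goal1, ?_⟩
  -- From hver1, hver1': g^(m*(C-C')) * c₁^(Z-Z') = c₂^(C-C')
  have e1 : zpow' p g (m * (C - C')) * zpow' p c₁ (Z - Z') = zpow' p c₂ (C - C') := by
    rw [mul_sub, zpow'_sub g (hone g), zpow'_sub c₁ (hone c₁), zpow'_sub c₂ (hone c₂),
      div_mul_div_comm, hver1, hver1', mul_div_mul_comm, div_self', one_mul]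
  have key : zpow' p g m * zpow' p c₁ ((Z - Z') / (C - C')) = c₂ := by
    have := congrArg (fun x => zpow' p x ((C - C')⁻¹)) e1
    calc zpow' p g m * zpow' p c₁ ((Z - Z') / (C - C'))
        = zpow' p g (m * (C - C') * (C - C')⁻¹) * zpow' p c₁ ((Z - Z') * (C - C')⁻¹) := by
          rw [mul_assoc, hDinv, mul_one, div_eq_mul_inv]
      _ = zpow' p (zpow' p g (m * (C - C'))) ((C - C')⁻¹) *
            zpow' p (zpow' p c₁ (Z - Z')) ((C - C')⁻¹) := by
          rw [zpow'_mul g (hone g), zpow'_mul c₁ (hone c₁)]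
      _ = zpow' p (zpow' p g (m * (C - C')) * zpow' p c₁ (Z - Z')) ((C - C')⁻¹) := by
          simp only [zpow', mul_pow]
      _ = zpow' p (zpow' p c₂ (C - C')) ((C - C')⁻¹) := by rw [e1]
      _ = zpow' p c₂ ((C - C') * (C - C')⁻¹) := (zpow'_mul c₂ (hone c₂) _ _).symm
      _ = c₂ := by rw [hDinv, zpow'_one hp1]
  rw [← key]
  rw [mul_div_assoc]
  simp
end

section
/- Upper-bound soundness of the PoQoEA construction reduces to VPKE soundness: suppose each revealed pair (i, aᵢ) in the proof π satisfies aᵢ = Dec_k(cᵢ) (guaranteed by VPKE soundness) and aᵢ ≠ sᵢ, and the verifier accepts with claimed quality χ. Then χ ≥ Quality(Dec_k(c); G, G_s); i.e., the claimed quality is an upper bound of the true quality. -/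
open Finset

theorem card_filter_le_card_sub_of_subset_filter_not {ι : Type*} {s t : Finset ι}
    {p : ι → Prop} [DecidablePred p] (h : t ⊆ s.filter (fun i => ¬ p i)) :
    #(s.filter p) ≤ #s - #t := by
  have hsplit := card_filter_add_card_filter_not (s := s) (p := p)
  have ht := card_le_card h
  omega

/-- Upper-bound soundness of PoQoEA: if every revealed pair in the proof π
is a correctly decrypted answer disagreeing with the gold standard (with
distinct indices in G), and the verifier accepts with claimed quality
χ = |G| − |π|, then χ is an upper bound of the true quality. -/
theorem poqoea_upper_bound_soundness {ι α : Type*} [DecidableEq ι] [DecidableEq α]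
    (G : Finset ι) (s dec : ι → α) (π : Finset (ι × α))
    (hdistinct : (π.image Prod.fst).card = π.card)
    (hmem : ∀ q ∈ π, q.1 ∈ G ∧ q.2 = dec q.1 ∧ q.2 ≠ s q.1)
    (χ : ℕ) (hχ : χ = G.card - π.card) :
    (∑ i ∈ G, if dec i = s i then (1 : ℕ) else 0) ≤ χ := by
  rw [hχ, ← hdistinct, ← card_filter]
  apply card_filter_le_card_sub_of_subset_filter_not
  rintro _ hi
  obtain ⟨q, hq, rfl⟩ := mem_image.mp hi
  obtain ⟨hqG, hq_dec, hq_ne⟩ := hmem q hq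
  exact mem_filter.mpr ⟨hqG, hq_dec ▸ hq_ne⟩
end
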